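/- If η_f = 0, then g₀(s) < 1 for every s ≥ 0. -/

import Mathlib

open MeasureTheory Set Filter

/-- Hypotheses on the function `f₁` from Section 6.1 of the paper. -/
structure F1Hyp (ℓ ℓ₁ : ℝ) (f₁ : ℝ → ℝ) : Prop where
  hl : 0 < ℓ
  hl1 : 0 < ℓ₁
  cont : ContinuousOn f₁ (Icc 0 1)
  diff : ∃ d : ℝ → ℝ, ContinuousOn d (Ioc 0 1) ∧
    ∀ t ∈ Ioc (0:ℝ) 1, HasDerivWithinAt f₁ (d t) (Ioc 0 1) t
  anti : StrictAntiOn f₁ (Icc 0 1)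
  nonneg : ∀ t ∈ Icc (0:ℝ) 1, 0 ≤ f₁ t
  f10 : f₁ 0 = ℓ
  f11 : f₁ 1 = 0
  convexSqrt : ConvexOn ℝ (Icc 0 1) (fun u => f₁ (Real.sqrt u))
  lim0 : Tendsto (fun s => (f₁ s - ℓ + ℓ₁ * s) / s) (nhdsWithin 0 (Ioi 0)) (nhds 0)

/-- `γ` is admissible, with a.e. derivative `γ'` (absolute continuity is encoded by the
fundamental theorem of calculus representation with an `L¹` derivative). -/
def Admissible (γ γ' : ℝ → ℝ) : Prop :=
  IntegrableOn γ' (Icc 0 1) ∧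
  (∀ t ∈ Icc (0:ℝ) 1, γ t = ∫ u in (0:ℝ)..t, γ' u) ∧
  (∀ t ∈ Icc (0:ℝ) 1, 0 ≤ γ t ∧ γ t ≤ 1) ∧
  γ 0 = 0 ∧ γ 1 = 0

/-- The energy in the characterization (6.11). -/
noncomputable def energy (f₁ : ℝ → ℝ) (s : ℝ) (γ γ' : ℝ → ℝ) : ℝ :=
  ∫ t in (0:ℝ)..1, Real.sqrt (s ^ 2 * (f₁ (Real.sqrt (γ t))) ^ 2 + (γ' t) ^ 2 / 4)

/-- The cohesive energy density of pristine material, via characterization (6.11). -/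
noncomputable def g0 (f₁ : ℝ → ℝ) (s : ℝ) : ℝ :=
  sInf {x | ∃ γ γ' : ℝ → ℝ, Admissible γ γ' ∧ x = energy f₁ s γ γ'}


/-- `η_f := liminf_{t→1⁻} f₁(t)/(1−t²)`, as an element of `[0,∞]`. -/
noncomputable def etaF (f₁ : ℝ → ℝ) : ENNReal :=
  Filter.liminf (fun t => ENNReal.ofReal (f₁ t / (1 - t ^ 2))) (nhdsWithin 1 (Iio 1))

/-! Since `η_f = 0`, there are levels `t₀ < 1` with `f₁ t₀` small compared with `1 - t₀²`.
Use the trapezoidal path that climbs to `γ = t₀²` in time `τ`, stays there, and descends again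
in time `τ`. Bounding `√(A² + B²/4) ≤ A + |B|/2`, the two ramps cost at most `t₀² + 2τsℓ` and
the plateau at most `s f₁ t₀`; for `τ` small the total is below `1`. -/

lemma Real.sqrt_sq_add_sq_div_four_le {A : ℝ} (hA : 0 ≤ A) (B : ℝ) :
    √(A ^ 2 + B ^ 2 / 4) ≤ A + |B| / 2 :=
  Real.sqrt_le_iff.2 ⟨by positivity, by nlinarith [sq_abs B, abs_nonneg B]⟩

lemma admissible_of_lipschitzWith {γ : ℝ → ℝ} {K : NNReal} (hγ : LipschitzWith K γ)
    (h0 : γ 0 = 0) (h1 : γ 1 = 0) (hγ01 : ∀ t ∈ Icc (0:ℝ) 1, 0 ≤ γ t ∧ γ t ≤ 1) :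
    Admissible γ (deriv γ) := by
  have hac (t : ℝ) : AbsolutelyContinuousOnInterval γ 0 t :=
    hγ.lipschitzOnWith.absolutelyContinuousOnInterval
  refine ⟨(intervalIntegrable_iff_integrableOn_Icc_of_le zero_le_one).1
    (hac 1).intervalIntegrable_deriv, fun t _ => ?_, hγ01, h0, h1⟩
  rw [(hac t).integral_deriv_eq_sub, h0, sub_zero]

lemma g0_le_energy {γ γ' : ℝ → ℝ} (hγ : Admissible γ γ') (f₁ : ℝ → ℝ) (s : ℝ) :
    g0 f₁ s ≤ energy f₁ s γ γ' := by
  refine csInf_le ⟨0, ?_⟩ ⟨γ, γ', hγ, rfl⟩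
  rintro _ ⟨_, _, _, rfl⟩
  exact intervalIntegral.integral_nonneg zero_le_one fun _ _ => Real.sqrt_nonneg _

lemma integral_zero_one_le_of_le_on_Ioo {F : ℝ → ℝ} {C M τ : ℝ}
    (hF : IntegrableOn F (Icc 0 1)) (hτ : 0 ≤ τ) (hτ2 : τ ≤ 1 / 2) (hC : ∀ t ∈ Icc (0:ℝ) 1, F t ≤ C)
    (hM : ∀ t ∈ Ioo τ (1 - τ), F t ≤ M) (hM0 : 0 ≤ M) :
    ∫ t in (0:ℝ)..1, F t ≤ 2 * τ * C + M := by
  have hint (b c : ℝ) (hb : 0 ≤ b) (hbc : b ≤ c) (hc : c ≤ 1) :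
      IntervalIntegrable F volume b c :=
    (hF.mono_set (by rw [uIcc_of_le hbc]; exact Icc_subset_Icc hb hc)).intervalIntegrable
  have h_up : ∫ t in (0:ℝ)..τ, F t ≤ τ * C := by
    simpa using intervalIntegral.integral_mono_on hτ (hint 0 τ le_rfl hτ (by linarith))
      intervalIntegrable_const fun t ht => hC t ⟨ht.1, by linarith [ht.2]⟩
  have h_mid : ∫ t in τ..1 - τ, F t ≤ (1 - 2 * τ) * M := by
    have := intervalIntegral.integral_mono_on_of_le_Ioo (by linarith)
      (hint τ (1 - τ) hτ (by linarith) (by linarith)) intervalIntegrable_const hM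
    simp only [intervalIntegral.integral_const, smul_eq_mul] at this
    linarith
  have h_down : ∫ t in 1 - τ..1, F t ≤ τ * C := by
    simpa using intervalIntegral.integral_mono_on (show 1 - τ ≤ 1 by linarith)
      (hint (1 - τ) 1 (by linarith) (by linarith) le_rfl) intervalIntegrable_const
      fun t ht => hC t ⟨by linarith [ht.1], ht.2⟩
  rw [← intervalIntegral.integral_add_adjacent_intervals
      (hint 0 (1 - τ) le_rfl (by linarith) (by linarith))
      (hint (1 - τ) 1 (by linarith) (by linarith) le_rfl),
    ← intervalIntegral.integral_add_adjacent_intervals (hint 0 τ le_rfl hτ (by linarith))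
      (hint τ (1 - τ) hτ (by linarith) (by linarith))]
  nlinarith

noncomputable def trapezoid (a τ t : ℝ) : ℝ := min a (a / τ * min t (1 - t))

section Trapezoid

variable {a τ : ℝ}

lemma lipschitzWith_trapezoid (a τ : ℝ) : LipschitzWith ‖a / τ‖₊ (trapezoid a τ) := by
  have h : LipschitzWith 1 (fun t : ℝ => min t (1 - t)) := by
    simpa using LipschitzWith.id.min ((LipschitzWith.const 1).sub LipschitzWith.id)
  rw [show trapezoid a τ = fun t => min a (a / τ * min t (1 - t)) from rfl]
  simpa using ((lipschitzWith_smul (a / τ)).comp h).const_min a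

lemma abs_deriv_trapezoid_le (ha : 0 ≤ a) (hτ : 0 < τ) (t : ℝ) :
    |deriv (trapezoid a τ) t| ≤ a / τ := by
  simpa [abs_of_nonneg ha, abs_of_pos hτ] using
    norm_deriv_le_of_lipschitz (x₀ := t) (lipschitzWith_trapezoid a τ)

lemma trapezoid_le (t : ℝ) : trapezoid a τ t ≤ a := min_le_left _ _

lemma trapezoid_eq_of_mem_Icc (ha : 0 ≤ a) (hτ : 0 < τ) {t : ℝ} (ht : t ∈ Icc τ (1 - τ)) :
    trapezoid a τ t = a := by
  have hmin : τ ≤ min t (1 - t) := le_min ht.1 (by linarith [ht.2])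
  refine min_eq_left ?_
  calc a = a / τ * τ := (div_mul_cancel₀ a hτ.ne').symm
    _ ≤ a / τ * min t (1 - t) := by gcongr

lemma deriv_trapezoid_of_mem_Ioo (ha : 0 ≤ a) (hτ : 0 < τ) {t : ℝ} (ht : t ∈ Ioo τ (1 - τ)) :
    deriv (trapezoid a τ) t = 0 := by
  have : trapezoid a τ =ᶠ[nhds t] fun _ => a :=
    Filter.eventually_of_mem (Ioo_mem_nhds ht.1 ht.2) fun u hu =>
      trapezoid_eq_of_mem_Icc ha hτ (Ioo_subset_Icc_self hu)
  rw [this.deriv_eq, deriv_const]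

lemma admissible_trapezoid (ha : 0 ≤ a) (ha1 : a ≤ 1) (hτ : 0 < τ) :
    Admissible (trapezoid a τ) (deriv (trapezoid a τ)) := by
  refine admissible_of_lipschitzWith (lipschitzWith_trapezoid a τ) ?_ ?_ fun t ht => ⟨?_, ?_⟩
  · simp [trapezoid, ha]
  · simp [trapezoid, ha]
  · have := div_nonneg ha hτ.le
    have : 0 ≤ min t (1 - t) := le_min ht.1 (by linarith [ht.2])
    exact le_min ha (by positivity)
  · exact (trapezoid_le t).trans ha1

lemma energy_trapezoid_le {f₁ : ℝ → ℝ} {ℓ s : ℝ} (hcont : ContinuousOn f₁ (Icc 0 1))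
    (hf₁ : ∀ t ∈ Icc (0:ℝ) 1, 0 ≤ f₁ t ∧ f₁ t ≤ ℓ) (hs : 0 ≤ s) (ha : 0 ≤ a) (ha1 : a ≤ 1)
    (hτ : 0 < τ) (hτ2 : τ ≤ 1 / 2) :
    energy f₁ s (trapezoid a τ) (deriv (trapezoid a τ)) ≤ a + 2 * τ * s * ℓ + s * f₁ √a := by
  set γ := trapezoid a τ
  set F : ℝ → ℝ := fun t => √(s ^ 2 * f₁ √(γ t) ^ 2 + deriv γ t ^ 2 / 4)
  have hsqrt (t : ℝ) : √(γ t) ∈ Icc (0:ℝ) 1 :=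
    ⟨Real.sqrt_nonneg _, Real.sqrt_le_one.2 ((trapezoid_le t).trans ha1)⟩
  have hF_le (t : ℝ) : F t ≤ s * f₁ √(γ t) + |deriv γ t| / 2 := by
    simpa only [mul_pow] using
      Real.sqrt_sq_add_sq_div_four_le (mul_nonneg hs (hf₁ _ (hsqrt t)).1) (deriv γ t)
  have hF_ramp (t : ℝ) : F t ≤ s * ℓ + a / τ / 2 := by
    have h_slope : |deriv γ t| ≤ a / τ := abs_deriv_trapezoid_le ha hτ t
    have h_height := mul_le_mul_of_nonneg_left (hf₁ _ (hsqrt t)).2 hs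
    linarith [hF_le t]
  have hF_plateau : ∀ t ∈ Ioo τ (1 - τ), F t ≤ s * f₁ √a := fun t ht => by
    have h_height : γ t = a := trapezoid_eq_of_mem_Icc ha hτ (Ioo_subset_Icc_self ht)
    have h_slope : deriv γ t = 0 := deriv_trapezoid_of_mem_Ioo ha hτ ht
    simpa [h_height, h_slope] using hF_le t
  have hF_int : IntegrableOn F (Icc 0 1) := by
    have hG : Continuous fun t => f₁ √(γ t) :=
      hcont.comp_continuous (lipschitzWith_trapezoid a τ).continuous.sqrt hsqrt
    have hFm : Measurable F :=
      (((hG.measurable.pow_const 2).const_mul _).add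
        (((measurable_deriv γ).pow_const 2).div_const 4)).sqrt
    refine Measure.integrableOn_of_bounded (M := s * ℓ + a / τ / 2) measure_Icc_lt_top.ne
      hFm.aestronglyMeasurable (ae_of_all _ fun t => ?_)
    rw [Real.norm_of_nonneg (Real.sqrt_nonneg _)]
    exact hF_ramp t
  have h_mid : 0 ≤ s * f₁ √a :=
    mul_nonneg hs (hf₁ _ ⟨Real.sqrt_nonneg _, Real.sqrt_le_one.2 ha1⟩).1
  calc energy f₁ s γ (deriv γ) ≤ 2 * τ * (s * ℓ + a / τ / 2) + s * f₁ √a :=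
        integral_zero_one_le_of_le_on_Ioo hF_int hτ.le hτ2 (fun t _ => hF_ramp t) hF_plateau
          h_mid
    _ = a + 2 * τ * s * ℓ + s * f₁ √a := by
        field_simp
        ring

end Trapezoid

lemma exists_lt_mul_one_sub_sq_of_etaF_eq_zero {f₁ : ℝ → ℝ} (h : etaF f₁ = 0) {δ : ℝ}
    (hδ : 0 < δ) : ∃ t ∈ Ioo (0:ℝ) 1, f₁ t < δ * (1 - t ^ 2) := by
  have hfreq : ∃ᶠ t in nhdsWithin (1:ℝ) (Iio 1),
      ENNReal.ofReal (f₁ t / (1 - t ^ 2)) < ENNReal.ofReal δ :=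
    frequently_lt_of_liminf_lt (isCoboundedUnder_ge_of_le _ fun _ => le_top)
      (by rw [etaF] at h; rw [h]; exact ENNReal.ofReal_pos.2 hδ)
  obtain ⟨t, hlt, ht⟩ := (hfreq.and_eventually (Ioo_mem_nhdsLT zero_lt_one)).exists
  have : 0 < 1 - t ^ 2 := by nlinarith [ht.1, ht.2]
  exact ⟨t, ht, (div_lt_iff₀ this).1 ((ENNReal.ofReal_lt_ofReal_iff hδ).1 hlt)⟩

/-- if `η_f = 0`, then `g₀(s) < 1` for every `s ≥ 0`. -/
theorem stmt_6 (ℓ ℓ₁ : ℝ) (f₁ : ℝ → ℝ) (hf : F1Hyp ℓ ℓ₁ f₁)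
    (heta : etaF f₁ = 0) :
    ∀ s : ℝ, 0 ≤ s → g0 f₁ s < 1 := by
  intro s hs
  have hf₁ : ∀ t ∈ Icc (0:ℝ) 1, 0 ≤ f₁ t ∧ f₁ t ≤ ℓ := fun t ht =>
    ⟨hf.nonneg t ht, hf.f10 ▸ hf.anti.antitoneOn (left_mem_Icc.2 zero_le_one) ht ht.1⟩
  obtain ⟨t₀, ⟨ht₀, ht₀1⟩, hft₀⟩ :=
    exists_lt_mul_one_sub_sq_of_etaF_eq_zero heta (δ := 1 / (2 * (s + 1))) (by positivity)
  have ha1 : t₀ ^ 2 < 1 := by nlinarith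
  set τ := (1 - t₀ ^ 2) / (4 * (s * ℓ + 1))
  have hsℓ : 0 ≤ s * ℓ := mul_nonneg hs hf.hl.le
  have hτ : 0 < τ := by positivity
  have hτ2 : τ ≤ 1 / 2 := by
    rw [div_le_iff₀ (by positivity)]; nlinarith
  calc g0 f₁ s ≤ energy f₁ s (trapezoid (t₀ ^ 2) τ) (deriv (trapezoid (t₀ ^ 2) τ)) :=
        g0_le_energy (admissible_trapezoid (by positivity) ha1.le hτ) f₁ s
    _ ≤ t₀ ^ 2 + 2 * τ * s * ℓ + s * f₁ √(t₀ ^ 2) :=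
        energy_trapezoid_le hf.cont hf₁ hs (by positivity) ha1.le hτ hτ2
    _ < 1 := by
      have hτsℓ : 2 * τ * s * ℓ ≤ (1 - t₀ ^ 2) / 2 := by
        have : τ * (4 * (s * ℓ + 1)) = 1 - t₀ ^ 2 := div_mul_cancel₀ _ (by positivity)
        nlinarith
      have hsf : s * f₁ t₀ < (1 - t₀ ^ 2) / 2 :=
        calc s * f₁ t₀ ≤ s * (1 / (2 * (s + 1)) * (1 - t₀ ^ 2)) := by gcongr
          _ = s / (s + 1) * ((1 - t₀ ^ 2) / 2) := by field_simp
          _ < (1 - t₀ ^ 2) / 2 :=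
            mul_lt_of_lt_one_left (by linarith) ((div_lt_one (by positivity)).2 (by linarith))
      rw [Real.sqrt_sq ht₀.le]
      linarith
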